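/- arXiv:2012.04151 — 3 statements merged into one kernel-verified Lean document; each statement's English description precedes it below -/
import Mathlib

section
/- Let d ≥ 2, n ≥ 1, 0 < δ < 1/d, and q ∈ A_d^m. Define ν_i = max{c_i(q) − δ, 0} for each i ∈ A_d, and let J_q = {i ∈ A_d^n : max_j |c_j(i) − c_j(q)| ≤ δ}. Then log₂|J_q| ≤ −n·Σ_{i∈A_d} ν_i log₂ ν_i + n·(log₂ n)·(1 − Σ_i ν_i) + (d+1)·log₂ e − (d/2)·log₂((1 − dδ)/d), with the convention 0·log₂ 0 = 0. -/
open Finset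
open scoped Classical

/-- Relative count of character `j` in the word `x ∈ A_d^k`. -/
noncomputable def relCount {k d : ℕ} (j : Fin d) (x : Fin k → Fin d) : ℝ :=
  ((univ.filter fun i => x i = j).card : ℝ) / k

/-- `ν_i = max{c_i(q) − δ, 0}`. -/
noncomputable def nuF {m d : ℕ} (δ : ℝ) (q : Fin m → Fin d) (i : Fin d) : ℝ :=
  max (relCount i q - δ) 0

lemma stirlingSeq_mono {a b : ℕ} (ha : 1 ≤ a) (hab : a ≤ b) :
    Stirling.stirlingSeq b ≤ Stirling.stirlingSeq a := by
  have h := Stirling.stirlingSeq'_antitone (show a - 1 ≤ b - 1 by omega)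
  simp only [Function.comp] at h
  rw [Nat.succ_eq_add_one, Nat.succ_eq_add_one, Nat.sub_add_cancel ha,
    Nat.sub_add_cancel (ha.trans hab)] at h
  exact h

lemma stirlingSeq_le (n : ℕ) (hn : 1 ≤ n) :
    Stirling.stirlingSeq n ≤ Real.exp 1 / Real.sqrt 2 := by
  simpa using stirlingSeq_mono le_rfl hn

lemma stirlingSeq_ge (n : ℕ) (hn : 1 ≤ n) : Real.sqrt Real.pi ≤ Stirling.stirlingSeq n := by
  have ht : Filter.Tendsto (fun m => Stirling.stirlingSeq (m + n)) Filter.atTop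
      (nhds (Real.sqrt Real.pi)) :=
    (Stirling.tendsto_stirlingSeq_sqrt_pi.comp (Filter.tendsto_add_atTop_nat n))
  refine le_of_tendsto ht (Filter.Eventually.of_forall fun m => ?_)
  exact stirlingSeq_mono hn (Nat.le_add_left n m)

lemma fact_upper (n : ℕ) (hn : 1 ≤ n) :
    (n.factorial : ℝ) ≤ Real.exp 1 * Real.sqrt n * ((n : ℝ) / Real.exp 1) ^ n := by
  have hpos : (0:ℝ) < Real.sqrt (2 * n) * ((n : ℝ) / Real.exp 1) ^ n := by
    have : (0:ℝ) < (n:ℝ) := by exact_mod_cast hn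
    positivity
  have h := stirlingSeq_le n hn
  rw [Stirling.stirlingSeq, div_le_iff₀ hpos] at h
  calc (n.factorial : ℝ) ≤ Real.exp 1 / Real.sqrt 2 * (Real.sqrt (2*n) * ((n:ℝ)/Real.exp 1)^n) := h
    _ = Real.exp 1 * Real.sqrt n * ((n : ℝ) / Real.exp 1) ^ n := by
        rw [show (2 * (n:ℝ)) = 2 * n by ring, Real.sqrt_mul (by norm_num) (n:ℝ)]
        rw [div_mul_eq_mul_div, ← mul_assoc]
        field_simp

lemma fact_lower (k : ℕ) (hk : 1 ≤ k) :
    Real.sqrt k * ((k : ℝ) / Real.exp 1) ^ k ≤ (k.factorial : ℝ) := by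
  have hpos : (0:ℝ) < Real.sqrt (2 * k) * ((k : ℝ) / Real.exp 1) ^ k := by
    have : (0:ℝ) < (k:ℝ) := by exact_mod_cast hk
    positivity
  have h := stirlingSeq_ge k hk
  rw [Stirling.stirlingSeq, le_div_iff₀ hpos] at h
  have h2 : Real.sqrt k * ((k : ℝ) / Real.exp 1) ^ k ≤
      Real.sqrt Real.pi * (Real.sqrt (2*k) * ((k:ℝ)/Real.exp 1)^k) := by
    have hs : Real.sqrt k ≤ Real.sqrt Real.pi * Real.sqrt (2*k) := by
      rw [← Real.sqrt_mul (le_of_lt Real.pi_pos)]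
      apply Real.sqrt_le_sqrt
      nlinarith [Real.pi_gt_three, Nat.cast_nonneg (α := ℝ) k]
    have hp : (0:ℝ) ≤ ((k:ℝ)/Real.exp 1)^k := by positivity
    nlinarith [hs, hp]
  linarith

lemma fact_lower_weak (k : ℕ) : ((k : ℝ) / Real.exp 1) ^ k ≤ (k.factorial : ℝ) := by
  rcases Nat.eq_zero_or_pos k with h | h
  · subst h; simp
  · refine le_trans ?_ (fact_lower k h)
    have h1 : (1:ℝ) ≤ Real.sqrt k := by
      rw [show (1:ℝ) = Real.sqrt 1 by simp]
      exact Real.sqrt_le_sqrt (by exact_mod_cast h)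
    nlinarith [pow_nonneg (show (0:ℝ) ≤ (k:ℝ)/Real.exp 1 by positivity) k]

lemma log_fact_upper (n : ℕ) (hn : 1 ≤ n) :
    Real.log n.factorial ≤ 1 + (1/2) * Real.log n + n * Real.log n - n := by
  have hnp : (0:ℝ) < n := by exact_mod_cast hn
  have h := Real.log_le_log (by positivity) (fact_upper n hn)
  rw [Real.log_mul (by positivity) (by positivity), Real.log_mul (Real.exp_ne_zero 1)
    (by positivity), Real.log_exp, Real.log_pow, Real.log_div (ne_of_gt hnp)
    (Real.exp_ne_zero 1), Real.log_exp, Real.log_sqrt (le_of_lt hnp)] at h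
  calc Real.log n.factorial ≤ 1 + Real.log n / 2 + n * (Real.log n - 1) := h
    _ = 1 + (1/2) * Real.log n + n * Real.log n - n := by ring

lemma log_fact_lower (k : ℕ) :
    (k : ℝ) * Real.log k - k ≤ Real.log k.factorial := by
  rcases Nat.eq_zero_or_pos k with h | h
  · subst h; simp
  have hkp : (0:ℝ) < k := by exact_mod_cast h
  have hf : (0:ℝ) < ((k:ℝ)/Real.exp 1)^k := by positivity
  have hlog := Real.log_le_log hf (fact_lower_weak k)
  rw [Real.log_pow, Real.log_div (ne_of_gt hkp) (Real.exp_ne_zero 1), Real.log_exp] at hlog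
  nlinarith

lemma log_fact_lower' (k : ℕ) (hk : 1 ≤ k) :
    (k : ℝ) * Real.log k - k + (1/2) * Real.log k ≤ Real.log k.factorial := by
  have hkp : (0:ℝ) < k := by exact_mod_cast hk
  have hf : (0:ℝ) < Real.sqrt k * ((k:ℝ)/Real.exp 1)^k := by positivity
  have hlog := Real.log_le_log hf (fact_lower k hk)
  rw [Real.log_mul (by positivity) (by positivity), Real.log_pow,
    Real.log_div (ne_of_gt hkp) (Real.exp_ne_zero 1), Real.log_exp,
    Real.log_sqrt (le_of_lt hkp)] at hlog
  nlinarith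

lemma log_le_div_e {y : ℝ} (hy : 0 < y) : Real.log y ≤ y / Real.exp 1 := by
  have h1 : Real.log (y / Real.exp 1) = Real.log y - 1 := by
    rw [Real.log_div (ne_of_gt hy) (Real.exp_ne_zero 1), Real.log_exp]
  have h2 : Real.log (y / Real.exp 1) ≤ y / Real.exp 1 - 1 :=
    Real.log_le_sub_one_of_pos (by positivity)
  have h3 : (1:ℝ) ≤ Real.exp 1 := by
    have := Real.add_one_le_exp (1:ℝ); linarith
  have h4 : y / Real.exp 1 ≤ y := by
    rw [div_le_iff₀ (by positivity)]; nlinarith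
  linarith

-- I2
lemma RlogdR (d R : ℕ) (hd : 1 ≤ d) : (R:ℝ) * Real.log d - R * Real.log R ≤ d := by
  rcases Nat.eq_zero_or_pos R with h | h
  · subst h; simp [Nat.cast_nonneg]
  have hRp : (0:ℝ) < R := by exact_mod_cast h
  have hdp : (0:ℝ) < d := by exact_mod_cast hd
  have h1 : Real.log ((d:ℝ)/R) ≤ ((d:ℝ)/R) / Real.exp 1 := log_le_div_e (by positivity)
  rw [Real.log_div (ne_of_gt hdp) (ne_of_gt hRp)] at h1
  have h3 : (1:ℝ) ≤ Real.exp 1 := by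
    have := Real.add_one_le_exp (1:ℝ); linarith
  have h4 : ((d:ℝ)/R) / Real.exp 1 ≤ (d:ℝ)/R := by
    rw [div_le_iff₀ (by positivity)]
    have : (0:ℝ) < (d:ℝ)/R := by positivity
    nlinarith
  have h5 : Real.log d - Real.log R ≤ (d:ℝ)/R := by linarith
  calc (R:ℝ) * Real.log d - R * Real.log R = R * (Real.log d - Real.log R) := by ring
    _ ≤ R * ((d:ℝ)/R) := by exact mul_le_mul_of_nonneg_left h5 (le_of_lt hRp)
    _ = d := by field_simp

-- I3 per-j
lemma ceil_entropy (y : ℝ) (hy : 0 ≤ y) :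
    y * Real.log y ≤ (⌈y⌉₊ : ℝ) * Real.log (⌈y⌉₊ : ℝ) := by
  rcases eq_or_lt_of_le hy with h | h
  · simp [← h]
  have hm : 1 ≤ ⌈y⌉₊ := Nat.one_le_ceil_iff.mpr h
  have hmy : y ≤ (⌈y⌉₊ : ℝ) := Nat.le_ceil y
  have hm1 : (1:ℝ) ≤ (⌈y⌉₊ : ℝ) := by exact_mod_cast hm
  rcases le_or_gt y 1 with h1 | h1
  · have : y * Real.log y ≤ 0 := mul_nonpos_of_nonneg_of_nonpos (le_of_lt h)
      (Real.log_nonpos (le_of_lt h) h1)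
    have : (0:ℝ) ≤ (⌈y⌉₊ : ℝ) * Real.log (⌈y⌉₊ : ℝ) := by
      apply mul_nonneg (by positivity) (Real.log_nonneg hm1)
    linarith [mul_nonpos_of_nonneg_of_nonpos (le_of_lt h) (Real.log_nonpos (le_of_lt h) h1)]
  · have hly : 0 ≤ Real.log y := Real.log_nonneg (le_of_lt h1)
    have : Real.log y ≤ Real.log (⌈y⌉₊ : ℝ) := Real.log_le_log (by linarith) hmy
    nlinarith

noncomputable def Dset (n d : ℕ) (msz : Fin d → ℕ) (s : Finset (Fin d)) :
    Finset (Fin d → Finset (Fin n)) :=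
  univ.filter fun t => (∀ j ∈ s, (t j).card = msz j) ∧ (∀ j, j ∉ s → t j = ∅) ∧
    ((s : Set (Fin d)).PairwiseDisjoint t)

lemma Dset_card_mul (n d : ℕ) (msz : Fin d → ℕ) (s : Finset (Fin d)) :
    (Dset n d msz s).card * ((∏ j ∈ s, (msz j).factorial) *
      (n - ∑ j ∈ s, msz j).factorial) ≤ n.factorial := by
  classical
  induction s using Finset.induction_on with
  | empty =>
      have hsub : Dset n d msz ∅ ⊆ {fun _ => (∅ : Finset (Fin n))} := by
        intro t ht
        simp only [Dset, mem_filter] at ht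
        simp only [mem_singleton]
        funext j
        exact ht.2.2.1 j (by simp)
      have hcard : (Dset n d msz ∅).card ≤ 1 := le_trans (card_le_card hsub) (by simp)
      simp only [Finset.prod_empty, Finset.sum_empty, one_mul, Nat.sub_zero]
      calc (Dset n d msz ∅).card * n.factorial ≤ 1 * n.factorial :=
            Nat.mul_le_mul hcard le_rfl
        _ = n.factorial := one_mul _
  | @insert a s ha ih =>
      set N := n - ∑ j ∈ s, msz j with hN
      have hmaps : ∀ t ∈ Dset n d msz (insert a s),
          Function.update t a ∅ ∈ Dset n d msz s := by
        intro t ht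
        simp only [Dset, mem_filter] at ht ⊢
        obtain ⟨-, h1, h2, h3⟩ := ht
        refine ⟨mem_univ _, fun j hj => ?_, fun j hj => ?_, ?_⟩
        · rw [Function.update_of_ne (by rintro rfl; exact ha hj)]
          exact h1 j (mem_insert_of_mem hj)
        · rcases eq_or_ne j a with rfl | hne
          · simp
          · rw [Function.update_of_ne hne]
            exact h2 j (by simp [hj, hne])
        · intro x hx y hy hxy
          have hx' : x ∈ (↑(insert a s) : Set (Fin d)) := by
            simp only [coe_insert, Set.mem_insert_iff]; right; exact hx
          have hy' : y ∈ (↑(insert a s) : Set (Fin d)) := by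
            simp only [coe_insert, Set.mem_insert_iff]; right; exact hy
          have hd := h3 hx' hy' hxy
          simp only [Function.onFun] at hd ⊢
          rwa [Function.update_of_ne (by rintro rfl; exact ha hx),
            Function.update_of_ne (by rintro rfl; exact ha hy)]
      have hfiber : ∀ b ∈ Dset n d msz s,
          ((Dset n d msz (insert a s)).filter fun t => Function.update t a ∅ = b).card ≤
            N.choose (msz a) := by
        intro b hb
        have hinj : Set.InjOn (fun t : Fin d → Finset (Fin n) => t a)
            ↑((Dset n d msz (insert a s)).filter fun t => Function.update t a ∅ = b) := by
          intro t ht t' ht' hE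
          simp only [mem_coe, mem_filter] at ht ht'
          funext j
          rcases eq_or_ne j a with rfl | hne
          · exact hE
          · have h := ht.2.trans ht'.2.symm
            have h' := congrFun h j
            rwa [Function.update_of_ne hne, Function.update_of_ne hne] at h'
        have hmapsto : ∀ t ∈ (Dset n d msz (insert a s)).filter
            (fun t => Function.update t a ∅ = b),
            t a ∈ Finset.powersetCard (msz a) (univ \ s.biUnion b) := by
          intro t ht
          simp only [mem_filter] at ht
          obtain ⟨htd, htb⟩ := ht
          simp only [Dset, mem_filter] at htd
          obtain ⟨-, h1, h2, h3⟩ := htd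
          rw [Finset.mem_powersetCard]
          constructor
          · intro x hx
            rw [mem_sdiff]
            refine ⟨mem_univ _, ?_⟩
            intro hxB
            rw [mem_biUnion] at hxB
            obtain ⟨j, hj, hxj⟩ := hxB
            have hbj : b j = t j := by
              rw [← htb, Function.update_of_ne (by rintro rfl; exact ha hj)]
            rw [hbj] at hxj
            have hja : (j : Fin d) ≠ a := by rintro rfl; exact ha hj
            have hdisj := h3 (Finset.mem_coe.mpr (mem_insert_self a s))
              (Finset.mem_coe.mpr (mem_insert_of_mem hj)) (Ne.symm hja)
            simp only [Function.onFun] at hdisj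
            exact (Finset.disjoint_left.mp hdisj) hx hxj
          · exact h1 a (mem_insert_self a s)
        calc ((Dset n d msz (insert a s)).filter fun t => Function.update t a ∅ = b).card
            ≤ (Finset.powersetCard (msz a) (univ \ s.biUnion b)).card :=
              Finset.card_le_card_of_injOn _ (fun t ht => hmapsto t ht) hinj
          _ = (univ \ s.biUnion b).card.choose (msz a) := Finset.card_powersetCard _ _
          _ = N.choose (msz a) := by
              congr 1
              rw [Finset.card_sdiff_of_subset (Finset.subset_univ _), Finset.card_univ,
                Fintype.card_fin]
              simp only [Dset, mem_filter] at hb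
              rw [Finset.card_biUnion (fun x hx y hy hxy => hb.2.2.2 hx hy hxy)]
              rw [Finset.sum_congr rfl fun j hj => hb.2.1 j hj]
      have hstep : (Dset n d msz (insert a s)).card ≤
          N.choose (msz a) * (Dset n d msz s).card :=
        Finset.card_le_mul_card_image_of_maps_to hmaps _ hfiber
      rw [Finset.prod_insert ha, Finset.sum_insert ha]
      rcases le_or_gt (msz a) N with hle | hlt
      · have key : N.choose (msz a) * (msz a).factorial * (N - msz a).factorial
            = N.factorial := Nat.choose_mul_factorial_mul_factorial hle
        have hsub : n - (msz a + ∑ j ∈ s, msz j) = N - msz a := by omega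
        rw [hsub]
        refine le_trans (Nat.mul_le_mul hstep le_rfl) (le_trans (le_of_eq ?_) ih)
        rw [← key]; ring
      · have h0 : N.choose (msz a) = 0 := Nat.choose_eq_zero_of_lt hlt
        have hz : (Dset n d msz (insert a s)).card = 0 := by
          rw [h0, zero_mul] at hstep; omega
        simp [hz]

noncomputable def pickSub {α : Type*} [DecidableEq α] (s : Finset α) (k : ℕ) : Finset α :=
  if h : k ≤ s.card then (Finset.exists_subset_card_eq h).choose else ∅

lemma pickSub_spec {α : Type*} [DecidableEq α] (s : Finset α) (k : ℕ) (h : k ≤ s.card) :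
    pickSub s k ⊆ s ∧ (pickSub s k).card = k := by
  rw [pickSub, dif_pos h]
  obtain ⟨h1, h2⟩ := (Finset.exists_subset_card_eq h).choose_spec
  exact ⟨h1, h2⟩

lemma card_fixed_on (n d : ℕ) (hd : 1 ≤ d) (B : Finset (Fin n)) (z : Fin d) :
    ((univ : Finset (Fin n → Fin d)).filter fun g => ∀ x ∈ B, g x = z).card
      ≤ d ^ (n - B.card) := by
  classical
  have : ((univ : Finset (Fin n → Fin d)).filter fun g => ∀ x ∈ B, g x = z).card
      ≤ (univ : Finset ((univ \ B : Finset (Fin n)) → Fin d)).card := by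
    apply Finset.card_le_card_of_injOn (fun g => fun x => g x.1) (fun g _ => mem_univ _)
    intro g hg g' hg' hE
    simp only [mem_coe, mem_filter] at hg hg'
    funext x
    by_cases hx : x ∈ B
    · rw [hg.2 x hx, hg'.2 x hx]
    · exact congrFun hE ⟨x, by simp [hx]⟩
  refine le_trans this ?_
  rw [Finset.card_univ, Fintype.card_fun, Fintype.card_coe, Fintype.card_fin,
    Finset.card_sdiff_of_subset (Finset.subset_univ _), Finset.card_univ, Fintype.card_fin]

lemma J_card_le (n d : ℕ) (hd : 2 ≤ d) (msz : Fin d → ℕ) (J : Finset (Fin n → Fin d))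
    (hJ : ∀ i ∈ J, ∀ j, msz j ≤ ((univ : Finset (Fin n)).filter fun x => i x = j).card) :
    J.card ≤ (Dset n d msz univ).card * d ^ (n - ∑ j, msz j) := by
  classical
  set z : Fin d := ⟨0, by omega⟩ with hz
  set tfun : (Fin n → Fin d) → Fin d → Finset (Fin n) :=
    fun i j => pickSub ((univ : Finset (Fin n)).filter fun x => i x = j) (msz j) with htfun
  have hsub : ∀ i ∈ J, ∀ j, tfun i j ⊆ (univ : Finset (Fin n)).filter fun x => i x = j :=
    fun i hi j => (pickSub_spec _ _ (hJ i hi j)).1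
  have hcardt : ∀ i ∈ J, ∀ j, (tfun i j).card = msz j :=
    fun i hi j => (pickSub_spec _ _ (hJ i hi j)).2
  have hval : ∀ i ∈ J, ∀ j, ∀ x ∈ tfun i j, i x = j := by
    intro i hi j x hx
    have := hsub i hi j hx
    simpa using (mem_filter.mp this).2
  set S := (Dset n d msz univ).sigma (fun t => (univ : Finset (Fin n → Fin d)).filter
      fun g => ∀ x ∈ univ.biUnion t, g x = z) with hS
  have hle : J.card ≤ S.card := by
    apply Finset.card_le_card_of_injOn
      (fun i => ⟨tfun i, fun x => if x ∈ univ.biUnion (tfun i) then z else i x⟩)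
    · intro i hi
      rw [hS, Finset.mem_coe, Finset.mem_sigma]
      constructor
      · simp only [Dset, mem_filter]
        refine ⟨mem_univ _, fun j _ => hcardt i hi j, fun j hj => absurd (mem_univ j) hj, ?_⟩
        intro a _ b _ hab
        simp only [Function.onFun]
        rw [Finset.disjoint_left]
        intro x hxa hxb
        exact hab ((hval i hi a x hxa).symm.trans (hval i hi b x hxb))
      · simp only [mem_filter]
        exact ⟨mem_univ _, fun x hx => if_pos hx⟩
    · intro i hi i' hi' hE
      have ht : tfun i = tfun i' := congrArg Sigma.fst hE
      have hg' : (fun x => if x ∈ univ.biUnion (tfun i) then z else i x)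
          = (fun x => if x ∈ univ.biUnion (tfun i') then z else i' x) :=
        congrArg Sigma.snd hE
      funext x
      by_cases hx : x ∈ univ.biUnion (tfun i)
      · obtain ⟨j, -, hxj⟩ := mem_biUnion.mp hx
        have h1 : i x = j := hval i (mem_coe.mp hi) j x hxj
        have hxj' : x ∈ tfun i' j := by rw [← ht]; exact hxj
        have h2 : i' x = j := hval i' (mem_coe.mp hi') j x hxj'
        rw [h1, h2]
      · have hx' : x ∉ univ.biUnion (tfun i') := by rw [← ht]; exact hx
        have := congrFun hg' x
        rwa [if_neg hx, if_neg hx'] at this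
  refine le_trans hle ?_
  rw [hS, Finset.card_sigma]
  have hbound : ∀ t ∈ Dset n d msz univ,
      ((univ : Finset (Fin n → Fin d)).filter
        fun g => ∀ x ∈ univ.biUnion t, g x = z).card ≤ d ^ (n - ∑ j, msz j) := by
    intro t ht
    have h := card_fixed_on n d (by omega) (univ.biUnion t) z
    simp only [Dset, mem_filter] at ht
    have hBc : (univ.biUnion t).card = ∑ j, msz j := by
      rw [Finset.card_biUnion (fun a ha b hb hab => ht.2.2.2 (mem_coe.mpr ha)
        (mem_coe.mpr hb) hab)]
      exact Finset.sum_congr rfl fun j hj => ht.2.1 j hj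
    rwa [hBc] at h
  calc ∑ t ∈ Dset n d msz univ, ((univ : Finset (Fin n → Fin d)).filter
        fun g => ∀ x ∈ univ.biUnion t, g x = z).card
      ≤ ∑ _t ∈ Dset n d msz univ, d ^ (n - ∑ j, msz j) := Finset.sum_le_sum hbound
    _ = (Dset n d msz univ).card * d ^ (n - ∑ j, msz j) := by
        rw [Finset.sum_const, smul_eq_mul]

set_option maxHeartbeats 1000000 in
/-- Theorem (Jq bound): for `0 < δ < 1/d` and `J_q = {i ∈ A_d^n : ∀ j, |c_j(i) − c_j(q)| ≤ δ}`,
`log₂|J_q| ≤ −n Σ_i ν_i log₂ ν_i + n (log₂ n)(1 − Σ_i ν_i) + (d+1) log₂ e − (d/2) log₂((1−dδ)/d)`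
(with the convention `0·log₂ 0 = 0`, which `Real.logb` satisfies). -/
theorem stmt3 (d n m : ℕ) (hd : 2 ≤ d) (hn : 1 ≤ n) (hm : 1 ≤ m)
    (δ : ℝ) (hδ0 : 0 < δ) (hδ : δ < 1 / d) (q : Fin m → Fin d) :
    Real.logb 2 (((univ.filter fun i : Fin n → Fin d =>
        ∀ j : Fin d, |relCount j i - relCount j q| ≤ δ).card : ℝ))
      ≤ -(n : ℝ) * ∑ i : Fin d, nuF δ q i * Real.logb 2 (nuF δ q i)
        + (n : ℝ) * Real.logb 2 n * (1 - ∑ i : Fin d, nuF δ q i)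
        + ((d : ℝ) + 1) * Real.logb 2 (Real.exp 1)
        - ((d : ℝ) / 2) * Real.logb 2 ((1 - d * δ) / d) := by
  classical
  have hd0 : (0:ℝ) < d := by positivity
  have hn0 : (0:ℝ) < n := by exact_mod_cast hn
  have hm0 : (0:ℝ) < m := by exact_mod_cast hm
  have hdδ : 0 < 1 - (d:ℝ) * δ := by
    rw [lt_div_iff₀ hd0] at hδ; linarith
  set ν : Fin d → ℝ := nuF δ q with hν
  set J : Finset (Fin n → Fin d) := univ.filter fun i : Fin n → Fin d =>
    ∀ j : Fin d, |relCount j i - relCount j q| ≤ δ with hJdef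
  -- basic facts on relCount and ν
  have hc0 : ∀ j, 0 ≤ relCount j q := fun j => by
    rw [relCount]; positivity
  have hc1 : ∀ j, relCount j q ≤ 1 := fun j => by
    rw [relCount, div_le_one hm0]
    exact_mod_cast le_trans (card_le_card (subset_univ _)) (by simp)
  have hν0 : ∀ j, 0 ≤ ν j := fun j => le_max_right _ _
  have hνc : ∀ j, ν j ≤ relCount j q := fun j =>
    max_le (by linarith [hδ0]) (hc0 j)
  have hν1 : ∀ j, ν j ≤ 1 := fun j => le_trans (hνc j) (hc1 j)
  have hsum_c : ∑ j, relCount j q = 1 := by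
    have hfib : (univ : Finset (Fin m)).card
        = ∑ j : Fin d, ((univ : Finset (Fin m)).filter fun x => q x = j).card :=
      Finset.card_eq_sum_card_fiberwise (fun x _ => mem_univ (q x))
    have hfib' : ∑ j : Fin d, ((((univ : Finset (Fin m)).filter fun x => q x = j).card : ℕ) : ℝ)
        = (m : ℝ) := by
      rw [← Nat.cast_sum, ← hfib, card_univ, Fintype.card_fin]
    simp only [relCount]
    rw [← Finset.sum_div, hfib']
    exact div_self (ne_of_gt hm0)
  have hSν1 : ∑ j, ν j ≤ 1 := by
    rw [← hsum_c]; exact Finset.sum_le_sum fun j _ => hνc j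
  have hSν0 : 0 ≤ ∑ j, ν j := Finset.sum_nonneg fun j _ => hν0 j
  -- degenerate case
  rcases Nat.eq_zero_or_pos J.card with hJ0 | hJpos
  · rw [hJ0]
    push_cast
    rw [Real.logb_zero]
    have t1 : ∀ j, ν j * Real.logb 2 (ν j) ≤ 0 := by
      intro j
      rcases eq_or_lt_of_le (hν0 j) with h | h
      · rw [← h]; simp
      · exact mul_nonpos_of_nonneg_of_nonpos (hν0 j)
          (Real.logb_nonpos one_lt_two (le_of_lt h) (hν1 j))
    have t1' : ∑ j, ν j * Real.logb 2 (ν j) ≤ 0 :=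
      Finset.sum_nonpos fun j _ => t1 j
    have t2 : (0:ℝ) ≤ Real.logb 2 n := Real.logb_nonneg one_lt_two (by exact_mod_cast hn)
    have t3 : (0:ℝ) ≤ Real.logb 2 (Real.exp 1) :=
      Real.logb_nonneg one_lt_two (by linarith [Real.add_one_le_exp (1:ℝ)])
    have t4 : Real.logb 2 ((1 - d*δ)/d) ≤ 0 := by
      apply Real.logb_nonpos one_lt_two (by positivity)
      rw [div_le_one hd0]
      have h2d : (2:ℝ) ≤ d := by exact_mod_cast hd
      nlinarith [mul_pos hd0 hδ0]
    have e1 : (0:ℝ) ≤ -(n:ℝ) * ∑ j, ν j * Real.logb 2 (ν j) := by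
      rw [neg_mul]
      exact neg_nonneg.mpr (mul_nonpos_of_nonneg_of_nonpos (le_of_lt hn0) t1')
    have e2 : (0:ℝ) ≤ (n:ℝ) * Real.logb 2 n * (1 - ∑ j, ν j) := by
      apply mul_nonneg (mul_nonneg (le_of_lt hn0) t2); linarith
    nlinarith [mul_nonneg (by positivity : (0:ℝ) ≤ (d:ℝ)/2) (neg_nonneg.mpr t4),
      mul_nonneg (by positivity : (0:ℝ) ≤ (d:ℝ)+1) t3]
  -- main case
  have hJR : (1:ℝ) ≤ (J.card : ℝ) := by exact_mod_cast hJpos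
  have hne : Nonempty (Fin d) := ⟨⟨0, by omega⟩⟩
  have h2d : (2:ℝ) ≤ d := by exact_mod_cast hd
  obtain ⟨j₀, -, hj₀⟩ := Finset.exists_le_of_sum_le (Finset.univ_nonempty)
    (show ∑ _j : Fin d, (1:ℝ)/d ≤ ∑ j, relCount j q by
      rw [hsum_c, Finset.sum_const, card_univ, Fintype.card_fin, nsmul_eq_mul]
      rw [mul_one_div, div_self (ne_of_gt hd0)])
  have hνj₀ : (1 - (d:ℝ)*δ)/d ≤ ν j₀ := by
    refine le_trans ?_ (le_max_left _ _)
    have hEq : (1 - (d:ℝ)*δ)/d = 1/d - δ := by field_simp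
    rw [hEq]
    linarith
  have hνj₀pos : 0 < ν j₀ := lt_of_lt_of_le (by positivity) hνj₀
  set msz : Fin d → ℕ := fun j => ⌈(n:ℝ) * ν j⌉₊ with hmsz
  have hnν : ∀ j, (0:ℝ) ≤ (n:ℝ) * ν j := fun j => mul_nonneg hn0.le (hν0 j)
  have hceil : ∀ j, (n:ℝ) * ν j ≤ msz j := fun j => Nat.le_ceil _
  have hfibJ : ∀ i ∈ J, ∀ j, msz j ≤ ((univ : Finset (Fin n)).filter fun x => i x = j).card := by
    intro i hi j
    have hi' := (mem_filter.mp hi).2 j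
    have habs := (abs_le.mp hi').1
    have hx : ν j ≤ relCount j i := by
      apply max_le (by linarith) (by rw [relCount]; positivity)
    apply Nat.ceil_le.mpr
    calc (n:ℝ) * ν j ≤ n * relCount j i := mul_le_mul_of_nonneg_left hx hn0.le
      _ = (((univ : Finset (Fin n)).filter fun x => i x = j).card : ℝ) := by
          rw [relCount]; field_simp
  obtain ⟨i₀, hi₀⟩ := Finset.card_pos.mp hJpos
  have hsum_msz : ∑ j, msz j ≤ n := by
    have h1 : ∑ j, msz j ≤ ∑ j : Fin d, ((univ : Finset (Fin n)).filter
        fun x => i₀ x = j).card := Finset.sum_le_sum (fun j _ => hfibJ i₀ hi₀ j)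
    have h2 : (univ : Finset (Fin n)).card = ∑ j : Fin d, ((univ : Finset (Fin n)).filter
        fun x => i₀ x = j).card := Finset.card_eq_sum_card_fiberwise (fun x _ => mem_univ (i₀ x))
    rw [card_univ, Fintype.card_fin] at h2
    omega
  set R : ℕ := n - ∑ j, msz j with hR
  have hRcast : (R:ℝ) = (n:ℝ) - ∑ j, (msz j : ℝ) := by
    rw [hR, Nat.cast_sub hsum_msz, Nat.cast_sum]
  have hcount1 : J.card ≤ (Dset n d msz univ).card * d ^ R := J_card_le n d hd msz J hfibJ
  have hcount2 : (Dset n d msz univ).card * ((∏ j, (msz j).factorial) * R.factorial)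
      ≤ n.factorial := Dset_card_mul n d msz univ
  have hprodpos : (0:ℝ) < (∏ j, ((msz j).factorial : ℝ)) * (R.factorial : ℝ) := by positivity
  have hX : (J.card : ℝ) ≤ ((n.factorial : ℝ) * (d:ℝ)^R) /
      ((∏ j, ((msz j).factorial : ℝ)) * (R.factorial : ℝ)) := by
    rw [le_div_iff₀ hprodpos]
    have hnat : J.card * ((∏ j, (msz j).factorial) * R.factorial) ≤ n.factorial * d ^ R := by
      calc J.card * ((∏ j, (msz j).factorial) * R.factorial)
          ≤ ((Dset n d msz univ).card * d ^ R) * ((∏ j, (msz j).factorial) * R.factorial) :=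
            Nat.mul_le_mul hcount1 le_rfl
        _ = ((Dset n d msz univ).card * ((∏ j, (msz j).factorial) * R.factorial)) * d ^ R := by
            ring
        _ ≤ n.factorial * d ^ R := Nat.mul_le_mul hcount2 le_rfl
    exact_mod_cast hnat
  have hJpos' : (0:ℝ) < J.card := by linarith
  have hlog1 : Real.log (J.card) ≤ Real.log n.factorial + R * Real.log d
      - (∑ j, Real.log ((msz j).factorial)) - Real.log (R.factorial) := by
    have h := Real.log_le_log hJpos' hX
    rw [Real.log_div (by positivity) (ne_of_gt hprodpos),
      Real.log_mul (by positivity) (by positivity),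
      Real.log_mul (by positivity) (by positivity),
      Real.log_pow, Real.log_prod (fun j _ => by positivity)] at h
    linarith
  have hK4 : (n:ℝ) * Real.log n * (∑ j, ν j) + n * ∑ j, ν j * Real.log (ν j)
      ≤ ∑ j, (msz j : ℝ) * Real.log (msz j) := by
    have expand : ∑ j, ((n:ℝ) * ν j) * Real.log ((n:ℝ) * ν j)
        = (n:ℝ) * Real.log n * (∑ j, ν j) + n * ∑ j, ν j * Real.log (ν j) := by
      rw [Finset.mul_sum, Finset.mul_sum, ← Finset.sum_add_distrib]
      apply Finset.sum_congr rfl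
      intro j _
      rcases eq_or_lt_of_le (hν0 j) with h | h
      · rw [← h]; simp
      · rw [Real.log_mul (ne_of_gt hn0) (ne_of_gt h)]; ring
    rw [← expand]
    exact Finset.sum_le_sum (fun j _ => ceil_entropy _ (hnν j))
  have hm1 : 1 ≤ msz j₀ := Nat.one_le_ceil_iff.mpr (by positivity)
  have hm₀cast : (n:ℝ) * ((1 - (d:ℝ)*δ)/d) ≤ (msz j₀ : ℝ) :=
    le_trans (mul_le_mul_of_nonneg_left hνj₀ hn0.le) (hceil j₀)
  have hK2 : ∑ j, ((msz j:ℝ) * Real.log (msz j) - msz j) + (1/2) * Real.log (msz j₀)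
      ≤ ∑ j, Real.log ((msz j).factorial) := by
    have single : (1/2) * Real.log (msz j₀) ≤ ∑ j, (Real.log ((msz j).factorial)
        - ((msz j:ℝ) * Real.log (msz j) - msz j)) := by
      refine le_trans ?_ (Finset.single_le_sum
        (fun j _ => by linarith [log_fact_lower (msz j)]) (mem_univ j₀))
      linarith [log_fact_lower' (msz j₀) hm1]
    rw [Finset.sum_sub_distrib] at single
    linarith
  have hK6 : Real.log n - Real.log (msz j₀) ≤ Real.log d - Real.log (1 - (d:ℝ)*δ) := by
    have hmpos : (0:ℝ) < msz j₀ := by exact_mod_cast hm1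
    have hfrac : (n:ℝ)/(msz j₀) ≤ (d:ℝ)/(1 - (d:ℝ)*δ) := by
      rw [div_le_div_iff₀ hmpos hdδ]
      have h1 : (n:ℝ) * ((1 - (d:ℝ)*δ)/d) * d ≤ (msz j₀ : ℝ) * d :=
        mul_le_mul_of_nonneg_right hm₀cast hd0.le
      have h2 : (n:ℝ) * ((1 - (d:ℝ)*δ)/d) * d = n * (1 - (d:ℝ)*δ) := by
        field_simp
      linarith
    have h := Real.log_le_log (by positivity) hfrac
    rw [Real.log_div (ne_of_gt hn0) (ne_of_gt hmpos),
      Real.log_div (ne_of_gt hd0) (ne_of_gt hdδ)] at h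
    linarith
  have hK7 : (R:ℝ) * Real.log d - R * Real.log R ≤ d := RlogdR d R (by omega)
  have hup := log_fact_upper n hn
  have hlowR := log_fact_lower R
  have hLfact : (1/2) * (Real.log d - Real.log (1 - (d:ℝ)*δ))
      ≤ ((d:ℝ)/2) * (Real.log d - Real.log (1 - (d:ℝ)*δ)) := by
    have hlogd : (0:ℝ) ≤ Real.log d := Real.log_nonneg (by linarith)
    have hlog1dδ : Real.log (1 - (d:ℝ)*δ) ≤ 0 :=
      Real.log_nonpos hdδ.le (by nlinarith [mul_pos hd0 hδ0])
    apply mul_le_mul_of_nonneg_right (by linarith) (by linarith)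
  have hsplit : Real.log ((1 - (d:ℝ)*δ)/d) = Real.log (1 - (d:ℝ)*δ) - Real.log d :=
    Real.log_div (ne_of_gt hdδ) (ne_of_gt hd0)
  have hsum_split : ∑ j, ((msz j:ℝ) * Real.log (msz j) - (msz j:ℝ))
      = ∑ j, (msz j:ℝ) * Real.log (msz j) - ∑ j, (msz j:ℝ) := Finset.sum_sub_distrib _ _
  have hgoal_log : Real.log (J.card) ≤ -(n:ℝ) * (∑ j, ν j * Real.log (ν j))
      + (n:ℝ) * Real.log n * (1 - ∑ j, ν j) + ((d:ℝ) + 1)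
      - ((d:ℝ)/2) * Real.log ((1 - (d:ℝ)*δ)/d) := by
    rw [hsplit]
    linarith [hlog1, hK2, hK4, hK6, hK7, hup, hlowR, hRcast, hLfact, hsum_split]
  rw [Real.logb, div_le_iff₀ (Real.log_pos one_lt_two)]
  refine le_trans hgoal_log (le_of_eq ?_)
  simp only [Real.logb, Real.log_exp]
  have hsum2 : ∑ j, ν j * (Real.log (ν j) / Real.log 2)
      = (∑ j, ν j * Real.log (ν j)) / Real.log 2 := by
    rw [Finset.sum_div]
    exact Finset.sum_congr rfl (fun j _ => by ring)
  rw [hsum2]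
  have hl2 : Real.log 2 ≠ 0 := ne_of_gt (Real.log_pos one_lt_two)
  field_simp
end

section
/- Let X be a discrete random variable with d outcomes having probabilities p₀,…,p_{d−1}. Then for any fixed index i, H_d(1 − p_i) ≥ log_d(2) · H(X), where H is the binary-log Shannon entropy and H_d is the d-ary entropy function. Equality holds if and only if p_j = p_k for all j, k ≠ i. -/
open Finset

lemma term_ineq {a c : ℝ} (ha : 0 ≤ a) (hc : 0 < c) :
    a * Real.log c - a * Real.log a ≤ c - a ∧
      (a * Real.log c - a * Real.log a = c - a ↔ a = c) := by
  rcases eq_or_lt_of_le ha with h | h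
  · rw [← h]
    simp only [zero_mul, sub_zero, zero_sub, neg_zero]
    exact ⟨hc.le, trivial⟩
  · have hca : 0 < c / a := div_pos hc h
    have hlog : Real.log (c / a) = Real.log c - Real.log a := Real.log_div hc.ne' h.ne'
    have hle : Real.log (c / a) ≤ c / a - 1 := Real.log_le_sub_one_of_pos hca
    have hmul : a * (c / a - 1) = c - a := by field_simp
    constructor
    · have := mul_le_mul_of_nonneg_left hle h.le
      rw [hlog] at this
      nlinarith
    · constructor
      · intro he
        by_contra hne
        have hne1 : c / a ≠ 1 := by
          intro h1
          apply hne
          field_simp at h1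
          linarith
        have hlt : Real.log (c / a) < c / a - 1 := Real.log_lt_sub_one_of_pos hca hne1
        have := mul_lt_mul_of_pos_left hlt h
        rw [hlog] at this
        nlinarith
      · intro he; rw [he]; ring

/-- The `d`-ary entropy function `H_d(x) = x log_d(d−1) − x log_d x − (1−x) log_d(1−x)`
(with `0·log 0 = 0`, as satisfied by `Real.logb`). -/
noncomputable def Hd (d : ℕ) (x : ℝ) : ℝ :=
  x * Real.logb d (d - 1) - x * Real.logb d x - (1 - x) * Real.logb d (1 - x)

/-- For a discrete random variable with `d` outcomes of probabilities `p₀,…,p_{d−1}` and any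
fixed index `i`: `H_d(1 − p_i) ≥ log_d(2) · H(X)`, with equality iff `p_j = p_k` for all
`j, k ≠ i`. Here `H(X) = −Σ_j p_j log₂ p_j`. -/
theorem stmt6 (d : ℕ) (hd : 2 ≤ d) (p : Fin d → ℝ)
    (hp : ∀ j, 0 ≤ p j) (hp1 : ∑ j, p j = 1) (i : Fin d) :
    Hd d (1 - p i) ≥ Real.logb d 2 * (-∑ j, p j * Real.logb 2 (p j)) ∧
    (Hd d (1 - p i) = Real.logb d 2 * (-∑ j, p j * Real.logb 2 (p j)) ↔
      ∀ j k, j ≠ i → k ≠ i → p j = p k) := by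
  classical
  set S : Finset (Fin d) := Finset.univ.erase i with hS
  have hmem : i ∈ (Finset.univ : Finset (Fin d)) := Finset.mem_univ i
  set q : ℝ := 1 - p i with hqdef
  have hsplit : p i + ∑ j ∈ S, p j = 1 := by
    rw [hS, Finset.add_sum_erase _ _ hmem]; exact hp1
  have hqS : ∑ j ∈ S, p j = q := by rw [hqdef]; linarith
  have hq0 : 0 ≤ q := by rw [← hqS]; exact Finset.sum_nonneg fun j _ => hp j
  have hd1 : (1:ℝ) < (d:ℝ) := by exact_mod_cast hd
  have hL : 0 < Real.log d := Real.log_pos hd1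
  have hdm : (0:ℝ) < (d:ℝ) - 1 := by linarith
  have hcard : (S.card : ℝ) = (d:ℝ) - 1 := by
    rw [hS, Finset.card_erase_of_mem hmem, Finset.card_univ, Fintype.card_fin]
    have h1 : 1 ≤ d := by omega
    push_cast [Nat.cast_sub h1]
    ring
  set A : ℝ := q * Real.log ((d:ℝ) - 1) - q * Real.log q - (1 - q) * Real.log (1 - q) with hA
  set B : ℝ := -∑ j, p j * Real.log (p j) with hB
  have hpi : (1:ℝ) - q = p i := by rw [hqdef]; ring
  have hsplitlog : ∑ j, p j * Real.log (p j)
      = p i * Real.log (p i) + ∑ j ∈ S, p j * Real.log (p j) := by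
    rw [hS, Finset.add_sum_erase _ (fun j => p j * Real.log (p j)) hmem]
  have key : B ≤ A ∧ (A = B ↔ ∀ j k, j ≠ i → k ≠ i → p j = p k) := by
    rcases eq_or_lt_of_le hq0 with hq | hq
    · -- q = 0 case
      have hzero : ∀ j ∈ S, p j = 0 := by
        intro j hj
        have hs0 : ∑ j ∈ S, p j = 0 := by rw [hqS, ← hq]
        exact (Finset.sum_eq_zero_iff_of_nonneg (fun j _ => hp j)).mp hs0 j hj
      have hA0 : A = 0 := by
        rw [hA, ← hq]; simp
      have hB0 : B = 0 := by
        rw [hB, hsplitlog]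
        have hpi1 : p i = 1 := by linarith [hpi, hq]
        rw [hpi1, Real.log_one, Finset.sum_eq_zero (fun j hj => by rw [hzero j hj]; ring)]
        ring
      refine ⟨by rw [hA0, hB0], ?_, fun _ => by rw [hA0, hB0]⟩
      intro _ j k hj hk
      rw [hzero j (Finset.mem_erase_of_ne_of_mem hj (Finset.mem_univ j)),
          hzero k (Finset.mem_erase_of_ne_of_mem hk (Finset.mem_univ k))]
    · -- 0 < q case
      set c : ℝ := q / ((d:ℝ) - 1) with hc
      have hc0 : 0 < c := div_pos hq hdm
      have hterm : ∀ j ∈ S, p j * Real.log c - p j * Real.log (p j) ≤ c - p j :=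
        fun j _ => (term_ineq (hp j) hc0).1
      have hsumc : ∑ j ∈ S, (c - p j) = 0 := by
        rw [Finset.sum_sub_distrib, Finset.sum_const, hqS, nsmul_eq_mul, hcard, hc]
        field_simp
        ring
      set T : ℝ := ∑ j ∈ S, (p j * Real.log c - p j * Real.log (p j)) with hT
      have hTle : T ≤ 0 := by
        rw [hT, ← hsumc]; exact Finset.sum_le_sum hterm
      have hlogc : Real.log c = Real.log q - Real.log ((d:ℝ) - 1) :=
        Real.log_div hq.ne' hdm.ne'
      have hTeq : T = q * Real.log q - q * Real.log ((d:ℝ) - 1)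
          - ∑ j ∈ S, p j * Real.log (p j) := by
        rw [hT, Finset.sum_sub_distrib, ← Finset.sum_mul, hqS, hlogc]
        ring
      have hAB : A - B = -T := by
        rw [hA, hB, hTeq, hsplitlog, ← hpi]
        ring
      have hTiff : T = 0 ↔ ∀ j ∈ S, p j = c := by
        constructor
        · intro hT0
          by_contra hne
          push_neg at hne
          obtain ⟨j0, hj0, hj0ne⟩ := hne
          have hstrict : p j0 * Real.log c - p j0 * Real.log (p j0) < c - p j0 :=
            lt_of_le_of_ne (hterm j0 hj0)
              (fun he => hj0ne ((term_ineq (hp j0) hc0).2.mp he))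
          have : T < ∑ j ∈ S, (c - p j) :=
            Finset.sum_lt_sum hterm ⟨j0, hj0, hstrict⟩
          rw [hsumc] at this
          linarith
        · intro hall
          rw [hT]
          exact Finset.sum_eq_zero fun j hj => by rw [hall j hj]; ring
      have hcond : (∀ j ∈ S, p j = c) ↔ ∀ j k, j ≠ i → k ≠ i → p j = p k := by
        constructor
        · intro h j k hj hk
          rw [h j (Finset.mem_erase_of_ne_of_mem hj (Finset.mem_univ j)),
              h k (Finset.mem_erase_of_ne_of_mem hk (Finset.mem_univ k))]
        · intro h j hj
          have hjne : j ≠ i := (Finset.mem_erase.mp hj).1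
          have hsum : ∑ k ∈ S, p k = (S.card : ℝ) * p j := by
            rw [Finset.sum_congr rfl (fun k hk => h k j (Finset.mem_erase.mp hk).1 hjne),
              Finset.sum_const, nsmul_eq_mul]
          rw [hqS, hcard] at hsum
          rw [hc, hsum]
          field_simp
      constructor
      · linarith [hAB, hTle]
      · rw [← hcond, ← hTiff]
        constructor
        · intro h; linarith [hAB]
        · intro h; linarith [hAB]
  -- conversion from logb to log
  have hHd : Hd d q = A / Real.log d := by
    rw [Hd, hA]
    simp only [Real.logb]
    ring
  have h2 : Real.log 2 ≠ 0 := (Real.log_pos (by norm_num)).ne'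
  have hRHS : Real.logb d 2 * (-∑ j, p j * Real.logb 2 (p j)) = B / Real.log d := by
    simp only [Real.logb]
    rw [hB]
    rw [show (∑ x : Fin d, p x * (Real.log (p x) / Real.log 2))
        = (∑ x : Fin d, p x * Real.log (p x)) / Real.log 2 by
      rw [Finset.sum_div]
      exact Finset.sum_congr rfl fun x _ => (mul_div_assoc _ _ _).symm]
    field_simp
  refine ⟨?_, ?_⟩
  · rw [ge_iff_le, hHd, hRHS]
    exact (div_le_div_iff_of_pos_right hL).mpr key.1
  · rw [hHd, hRHS, div_left_inj' hL.ne']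
    exact key.2
end

section
/- Let |ψ⟩ = Σ_{i∈J} α_i |i⟩ ⊗ |φ_i⟩_E ∈ H_A ⊗ H_E be a pure state expanded in an orthonormal basis Z = {|i⟩} of H_A, with normalized |φ_i⟩_E, and let ρ = Σ_{i∈J} |α_i|² |i⟩⟨i| ⊗ |φ_i⟩⟨φ_i| be the associated mixed state. Then for any second orthonormal basis X of H_A, the min-entropy of the X-measurement satisfies H_min(X|E)_ψ ≥ H_min(X|E)_ρ − log₂|J|. -/
open Finset
open scoped Kronecker ComplexOrder

/-- Conditional quantum min-entropy `H_min(A|E)_ρ` of a bipartite state on `A ⊗ E`: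
`sup_{σ_E} max { λ : 2^{-λ} I_A ⊗ σ_E − ρ ≥ 0 }`. -/
noncomputable def condMinEntropy {A E : Type*} [Fintype A] [Fintype E]
    [DecidableEq A] [DecidableEq E] (ρ : Matrix (A × E) (A × E) ℂ) : ℝ :=
  sSup {l : ℝ | ∃ σ : Matrix E E ℂ, σ.PosSemidef ∧ σ.trace = 1 ∧
    (((2 : ℝ) ^ (-l)) • ((1 : Matrix A A ℂ) ⊗ₖ σ) - ρ).PosSemidef}

section StmtEightAux

open Matrix

lemma stmt8_mul_star_self_eq (z : ℂ) : z * star z = (↑(‖z‖^2) : ℂ) := by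
  push_cast; rw [Complex.star_def, Complex.mul_conj']

lemma stmt8_rank1_sum {E : Type*} [Fintype E] (x v : E → ℂ) :
    ∑ e, ∑ e', star (x e) * (v e * star (v e')) * x e' =
      (∑ e, star (x e) * v e) * star (∑ e, star (x e) * v e) := by
  rw [star_sum, Finset.sum_mul_sum]
  refine Finset.sum_congr rfl fun e _ => Finset.sum_congr rfl fun e' _ => ?_
  simp only [star_mul', star_star]
  ring

lemma stmt8_quad_expand {E : Type*} [Fintype E] (M : Matrix E E ℂ) (x : E → ℂ) :
    star x ⬝ᵥ M.mulVec x = ∑ e, ∑ e', star (x e) * M e e' * x e' := by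
  simp only [dotProduct, Matrix.mulVec, Pi.star_apply, Finset.mul_sum]
  exact Finset.sum_congr rfl fun e _ => Finset.sum_congr rfl fun e' _ => by ring

lemma stmt8_quad_block {A E : Type*} [Fintype A] [Fintype E] [DecidableEq A]
    (M : Matrix (A × E) (A × E) ℂ) (f : A → E → E → ℂ)
    (hM : ∀ b e b' e', M (b, e) (b', e') = if b = b' then f b e e' else 0)
    (x : A × E → ℂ) :
    star x ⬝ᵥ M.mulVec x = ∑ b, ∑ e, ∑ e', star (x (b, e)) * f b e e' * x (b, e') := by
  have key : ∀ b e, (∑ p : A × E, M (b, e) p * x p) = ∑ e', f b e e' * x (b, e') := by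
    intro b e
    rw [Fintype.sum_prod_type]
    rw [Finset.sum_eq_single b]
    · exact Finset.sum_congr rfl fun e' _ => by rw [hM]; simp
    · intro b' _ hb'
      apply Finset.sum_eq_zero
      intro e' _
      rw [hM]
      simp [Ne.symm hb']
    · simp
  simp only [dotProduct, Matrix.mulVec, Pi.star_apply]
  rw [Fintype.sum_prod_type]
  refine Finset.sum_congr rfl fun b _ => Finset.sum_congr rfl fun e _ => ?_
  rw [key, Finset.mul_sum]
  exact Finset.sum_congr rfl fun e' _ => by ring

lemma stmt8_quad_sum_rank1 {E A : Type*} [Fintype E] (J : Finset A) (c : A → ℂ)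
    (φ : A → E → ℂ) (x : E → ℂ) :
    ∑ e, ∑ e', star (x e) * (∑ i ∈ J, c i * (φ i e * star (φ i e'))) * x e' =
      ∑ i ∈ J, c i * ((∑ e, star (x e) * φ i e) * star (∑ e, star (x e) * φ i e)) := by
  have step : ∀ i ∈ J, c i * ((∑ e, star (x e) * φ i e) * star (∑ e, star (x e) * φ i e))
      = ∑ e, ∑ e', star (x e) * (c i * (φ i e * star (φ i e'))) * x e' := by
    intro i _
    rw [← stmt8_rank1_sum x (φ i), Finset.mul_sum]
    refine Finset.sum_congr rfl fun e _ => ?_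
    rw [Finset.mul_sum]
    exact Finset.sum_congr rfl fun e' _ => by ring
  rw [eq_comm]
  calc ∑ i ∈ J, c i * ((∑ e, star (x e) * φ i e) * star (∑ e, star (x e) * φ i e))
      = ∑ i ∈ J, ∑ e, ∑ e', star (x e) * (c i * (φ i e * star (φ i e'))) * x e' :=
        Finset.sum_congr rfl step
    _ = ∑ e, ∑ i ∈ J, ∑ e', star (x e) * (c i * (φ i e * star (φ i e'))) * x e' :=
        Finset.sum_comm
    _ = ∑ e, ∑ e', ∑ i ∈ J, star (x e) * (c i * (φ i e * star (φ i e'))) * x e' :=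
        Finset.sum_congr rfl fun e _ => Finset.sum_comm
    _ = ∑ e, ∑ e', star (x e) * (∑ i ∈ J, c i * (φ i e * star (φ i e'))) * x e' := by
        refine Finset.sum_congr rfl fun e _ => Finset.sum_congr rfl fun e' _ => ?_
        rw [Finset.mul_sum, Finset.sum_mul]

lemma stmt8_cs_lemma {A : Type*} (J : Finset A) (t : A → ℂ) :
    ‖∑ i ∈ J, t i‖ ^ 2 ≤ (J.card : ℝ) * ∑ i ∈ J, ‖t i‖ ^ 2 := by
  calc ‖∑ i ∈ J, t i‖ ^ 2 ≤ (∑ i ∈ J, ‖t i‖) ^ 2 := by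
        apply pow_le_pow_left₀ (norm_nonneg _) (norm_sum_le _ _)
    _ = (∑ i ∈ J, 1 * ‖t i‖) ^ 2 := by simp
    _ ≤ (∑ i ∈ J, (1:ℝ)^2) * ∑ i ∈ J, ‖t i‖^2 := sum_mul_sq_le_sq_mul_sq _ _ _
    _ = J.card * ∑ i ∈ J, ‖t i‖^2 := by simp

lemma stmt8_psd_combo {m : Type*} [Fintype m] (P Q : Matrix m m ℂ) (c : ℝ) (hc : 0 ≤ c)
    (hP : P.PosSemidef) (hQ : Q.PosSemidef) : (c • P + Q).PosSemidef := by
  rw [Matrix.posSemidef_iff_dotProduct_mulVec]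
  constructor
  · rw [Matrix.IsHermitian, conjTranspose_add, conjTranspose_smul, hP.1.eq, hQ.1.eq, star_trivial]
  · intro x
    rw [add_mulVec, dotProduct_add, smul_mulVec, dotProduct_smul]
    have h1 := hP.dotProduct_mulVec_nonneg x
    have h2 := hQ.dotProduct_mulVec_nonneg x
    have h3 : (0:ℂ) ≤ c • (star x ⬝ᵥ P.mulVec x) := by
      rw [Complex.real_smul]
      exact mul_nonneg (by exact_mod_cast Complex.zero_le_real.mpr hc) h1
    exact add_nonneg h3 h2

lemma stmt8_psd_diag {m : Type*} [Fintype m] [DecidableEq m] (M : Matrix m m ℂ)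
    (h : M.PosSemidef) (i : m) : 0 ≤ M i i := by
  have := h.dotProduct_mulVec_nonneg (Pi.single i 1)
  simp [dotProduct, mulVec, Pi.single_apply] at this
  simpa using this

lemma stmt8_four_sum {A E : Type*} [Fintype A] [Fintype E] (J : Finset A)
    (h : A → A → A → E → ℂ) :
    ∑ b, ∑ e, ∑ a ∈ J, ∑ a' ∈ J, h a a' b e
      = ∑ a ∈ J, ∑ a' ∈ J, ∑ b, ∑ e, h a a' b e := by
  calc ∑ b, ∑ e, ∑ a ∈ J, ∑ a' ∈ J, h a a' b e
      = ∑ b, ∑ a ∈ J, ∑ e, ∑ a' ∈ J, h a a' b e :=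
        Finset.sum_congr rfl fun b _ => Finset.sum_comm
    _ = ∑ a ∈ J, ∑ b, ∑ e, ∑ a' ∈ J, h a a' b e := Finset.sum_comm
    _ = ∑ a ∈ J, ∑ b, ∑ a' ∈ J, ∑ e, h a a' b e :=
        Finset.sum_congr rfl fun a _ => Finset.sum_congr rfl fun b _ => Finset.sum_comm
    _ = ∑ a ∈ J, ∑ a' ∈ J, ∑ b, ∑ e, h a a' b e :=
        Finset.sum_congr rfl fun a _ => Finset.sum_comm

end StmtEightAux

/-- Lemma (superposition vs. mixture): for the pure state
`|ψ⟩ = Σ_{i∈J} α_i |i⟩ ⊗ |φ_i⟩_E` (expanded in the standard `Z` basis of `H_A`) and the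
associated mixture `ρ = Σ_{i∈J} |α_i|² |i⟩⟨i| ⊗ |φ_i⟩⟨φ_i|`, measuring the `A` register in
a second orthonormal basis `X` yields classical-quantum states `σψ` and `σρ` satisfying
`H_min(X|E)_ψ ≥ H_min(X|E)_ρ − log₂|J|`. -/
theorem stmt8 {A E : Type*} [Fintype A] [Fintype E] [DecidableEq A] [DecidableEq E]
    (J : Finset A) (α : A → ℂ) (φ : A → E → ℂ)
    (hφ : ∀ i ∈ J, ∑ e, ‖φ i e‖ ^ 2 = 1)
    (hα : ∑ i ∈ J, ‖α i‖ ^ 2 = 1)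
    (X : A → A → ℂ)
    (hX : ∀ b b', ∑ a, star (X b a) * X b' a = if b = b' then 1 else 0)
    (σψ σρ : Matrix (A × E) (A × E) ℂ)
    (hσψ : ∀ b e b' e', σψ (b, e) (b', e') =
      if b = b' then
        (∑ a ∈ J, star (X b a) * (α a * φ a e)) *
          star (∑ a ∈ J, star (X b a) * (α a * φ a e'))
      else 0)
    (hσρ : ∀ b e b' e', σρ (b, e) (b', e') =
      if b = b' then
        ∑ i ∈ J, ((‖α i‖ ^ 2 : ℝ) : ℂ) * ((‖X b i‖ ^ 2 : ℝ) : ℂ) * (φ i e * star (φ i e'))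
      else 0) :
    condMinEntropy σψ ≥ condMinEntropy σρ - Real.logb 2 J.card := by
  classical
  open Matrix in
  -- basic facts about J
  have hJne : J.Nonempty := by
    by_contra h
    rw [Finset.not_nonempty_iff_eq_empty] at h
    rw [h] at hα; simp at hα
  have hnR : (1:ℝ) ≤ (J.card:ℝ) := by exact_mod_cast Finset.card_pos.mpr hJne
  have hc0 : 0 ≤ Real.logb 2 (J.card:ℝ) := Real.logb_nonneg (by norm_num) hnR
  have h2c : (2:ℝ) ^ (Real.logb 2 (J.card:ℝ)) = (J.card : ℝ) :=
    Real.rpow_logb (by norm_num) (by norm_num) (by linarith)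
  have hAne : Nonempty A := ⟨hJne.choose⟩
  -- orthonormality facts about X
  have hXcol : ∀ a a', ∑ b, star (X b a) * X b a' = if a = a' then (1:ℂ) else 0 := by
    have hM : Matrix.of X * (Matrix.of X)ᴴ = 1 := by
      ext b b'
      rw [Matrix.mul_apply]
      simp only [Matrix.conjTranspose_apply, Matrix.of_apply]
      calc ∑ a, X b a * star (X b' a) = ∑ a, star (X b' a) * X b a :=
            Finset.sum_congr rfl fun a _ => mul_comm _ _
        _ = if b' = b then 1 else 0 := hX b' b
        _ = (1 : Matrix A A ℂ) b b' := by
            simp only [Matrix.one_apply]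
            by_cases h : b = b' <;> simp [h, eq_comm]
    have hM2 : (Matrix.of X)ᴴ * Matrix.of X = 1 := mul_eq_one_comm.mp hM
    intro a a'
    have h3 := congrFun (congrFun hM2 a) a'
    rw [Matrix.mul_apply] at h3
    simpa [Matrix.conjTranspose_apply, Matrix.of_apply, Matrix.one_apply] using h3
  have hrowsum : ∀ b, ∑ a, ‖X b a‖^2 = (1:ℝ) := by
    intro b
    have h := hX b b
    rw [if_pos rfl] at h
    have h2 : ((∑ a, ‖X b a‖^2 : ℝ) : ℂ) = 1 := by
      push_cast
      rw [← h]
      refine Finset.sum_congr rfl fun a _ => ?_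
      rw [Complex.star_def, Complex.conj_mul']
    exact_mod_cast h2
  have hXle1 : ∀ b a, ‖X b a‖^2 ≤ 1 := fun b a => by
    rw [← hrowsum b]
    exact Finset.single_le_sum (fun i _ => sq_nonneg ‖X b i‖) (mem_univ a)
  -- normalization of the φ i
  have hφC : ∀ i ∈ J, ∑ e, φ i e * star (φ i e) = (1:ℂ) := by
    intro i hi
    calc ∑ e, φ i e * star (φ i e) = ∑ e, (↑(‖φ i e‖^2) : ℂ) :=
          Finset.sum_congr rfl fun e _ => stmt8_mul_star_self_eq _
      _ = ((∑ e, ‖φ i e‖^2 : ℝ) : ℂ) := by push_cast; rfl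
      _ = 1 := by rw [hφ i hi]; norm_num
  -- Hermitian facts
  have hψH : σψ.IsHermitian := by
    rw [Matrix.IsHermitian]
    ext ⟨b, e⟩ ⟨b', e'⟩
    rw [Matrix.conjTranspose_apply, hσψ, hσψ]
    by_cases h : b = b'
    · subst h
      simp only [if_pos rfl, eq_self_iff_true, if_true]
      rw [star_mul', star_star]
      ring
    · simp [h, Ne.symm h]
  have hρH : σρ.IsHermitian := by
    rw [Matrix.IsHermitian]
    ext ⟨b, e⟩ ⟨b', e'⟩
    rw [Matrix.conjTranspose_apply, hσρ, hσρ]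
    by_cases h : b = b'
    · subst h
      simp only [if_pos rfl, eq_self_iff_true, if_true]
      rw [star_sum]
      refine Finset.sum_congr rfl fun i _ => ?_
      simp only [star_mul', star_star, Complex.star_def, Complex.conj_ofReal,
        Complex.conj_conj]
      ring
    · simp [h, Ne.symm h]
  -- trace of σψ is 1
  have htrψ : ∑ p : A × E, σψ p p = (1:ℂ) := by
    have inner : ∀ a ∈ J, ∀ a' ∈ J,
        (∑ b, ∑ e, (star (X b a) * (α a * φ a e)) * star (star (X b a') * (α a' * φ a' e)))
          = (if a = a' then 1 else 0) *
              ((α a * star (α a')) * (∑ e, φ a e * star (φ a' e))) := by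
      intro a _ a' _
      rw [← hXcol a a', Finset.sum_mul]
      refine Finset.sum_congr rfl fun b _ => ?_
      calc ∑ e, (star (X b a) * (α a * φ a e)) * star (star (X b a') * (α a' * φ a' e))
          = ∑ e, (star (X b a) * X b a') * ((α a * star (α a')) * (φ a e * star (φ a' e))) :=
            Finset.sum_congr rfl fun e _ => by simp only [star_mul', star_star]; ring
        _ = (star (X b a) * X b a') * ((α a * star (α a')) * (∑ e, φ a e * star (φ a' e))) := by
            simp only [← Finset.mul_sum]
    calc ∑ p : A × E, σψ p p
        = ∑ b, ∑ e, (∑ a ∈ J, star (X b a) * (α a * φ a e)) *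
            star (∑ a' ∈ J, star (X b a') * (α a' * φ a' e)) := by
          rw [Fintype.sum_prod_type]
          exact Finset.sum_congr rfl fun b _ => Finset.sum_congr rfl fun e _ => by
            rw [hσψ]; simp
      _ = ∑ b, ∑ e, ∑ a ∈ J, ∑ a' ∈ J,
            (star (X b a) * (α a * φ a e)) * star (star (X b a') * (α a' * φ a' e)) := by
          refine Finset.sum_congr rfl fun b _ => Finset.sum_congr rfl fun e _ => ?_
          rw [star_sum, Finset.sum_mul_sum]
      _ = ∑ a ∈ J, ∑ a' ∈ J, ∑ b, ∑ e,
            (star (X b a) * (α a * φ a e)) * star (star (X b a') * (α a' * φ a' e)) :=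
          stmt8_four_sum J _
      _ = ∑ a ∈ J, ∑ a' ∈ J,
            (if a = a' then 1 else 0) * ((α a * star (α a')) * (∑ e, φ a e * star (φ a' e))) := by
          refine Finset.sum_congr rfl fun a ha => Finset.sum_congr rfl fun a' ha' => ?_
          exact inner a ha a' ha'
      _ = ∑ a ∈ J, (α a * star (α a)) * (∑ e, φ a e * star (φ a e)) := by
          refine Finset.sum_congr rfl fun a ha => ?_
          simp only [ite_mul, one_mul, zero_mul]
          rw [Finset.sum_ite_eq J a
            (fun a' => (α a * star (α a')) * (∑ e, φ a e * star (φ a' e))), if_pos ha]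
      _ = ∑ a ∈ J, (↑(‖α a‖^2) : ℂ) := by
          refine Finset.sum_congr rfl fun a ha => ?_
          rw [hφC a ha, mul_one, stmt8_mul_star_self_eq]
      _ = 1 := by rw [← Complex.ofReal_sum, hα]; norm_num
  -- the key PSD fact: |J| • σρ - σψ is PSD
  have hDpsd : (((J.card : ℝ)) • σρ - σψ).PosSemidef := by
    rw [Matrix.posSemidef_iff_dotProduct_mulVec]
    constructor
    · rw [Matrix.IsHermitian, conjTranspose_sub, conjTranspose_smul, hψH.eq, hρH.eq,
        star_trivial]
    · intro x
      rw [sub_mulVec, dotProduct_sub, smul_mulVec, dotProduct_smul]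
      have hQψ : star x ⬝ᵥ σψ.mulVec x
          = ∑ b, (∑ a ∈ J, star (X b a) * (α a * (∑ e, star (x (b, e)) * φ a e))) *
              star (∑ a ∈ J, star (X b a) * (α a * (∑ e, star (x (b, e)) * φ a e))) := by
        rw [stmt8_quad_block σψ (fun b e e' => (∑ a ∈ J, star (X b a) * (α a * φ a e)) *
            star (∑ a ∈ J, star (X b a) * (α a * φ a e'))) (fun b e b' e' => hσψ b e b' e') x]
        refine Finset.sum_congr rfl fun b _ => ?_
        rw [stmt8_rank1_sum (fun e => x (b, e)) (fun e => ∑ a ∈ J, star (X b a) * (α a * φ a e))]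
        have hswap : (∑ e, star (x (b, e)) * (∑ a ∈ J, star (X b a) * (α a * φ a e)))
            = ∑ a ∈ J, star (X b a) * (α a * (∑ e, star (x (b, e)) * φ a e)) := by
          calc ∑ e, star (x (b, e)) * (∑ a ∈ J, star (X b a) * (α a * φ a e))
              = ∑ e, ∑ a ∈ J, star (X b a) * (α a * (star (x (b, e)) * φ a e)) := by
                refine Finset.sum_congr rfl fun e _ => ?_
                rw [Finset.mul_sum]
                exact Finset.sum_congr rfl fun a _ => by ring
            _ = ∑ a ∈ J, ∑ e, star (X b a) * (α a * (star (x (b, e)) * φ a e)) :=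
                Finset.sum_comm
            _ = ∑ a ∈ J, star (X b a) * (α a * (∑ e, star (x (b, e)) * φ a e)) := by
                simp only [← Finset.mul_sum]
        rw [hswap]
      have hQρ : star x ⬝ᵥ σρ.mulVec x
          = ∑ b, ∑ i ∈ J, (((‖α i‖ ^ 2 : ℝ) : ℂ) * ((‖X b i‖ ^ 2 : ℝ) : ℂ)) *
              ((∑ e, star (x (b, e)) * φ i e) * star (∑ e, star (x (b, e)) * φ i e)) := by
        rw [stmt8_quad_block σρ (fun b e e' => ∑ i ∈ J,
            ((‖α i‖ ^ 2 : ℝ) : ℂ) * ((‖X b i‖ ^ 2 : ℝ) : ℂ) * (φ i e * star (φ i e')))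
            (fun b e b' e' => hσρ b e b' e') x]
        refine Finset.sum_congr rfl fun b _ => ?_
        rw [← stmt8_quad_sum_rank1 J
          (fun i => ((‖α i‖ ^ 2 : ℝ) : ℂ) * ((‖X b i‖ ^ 2 : ℝ) : ℂ)) φ (fun e => x (b, e))]
      rw [hQψ, hQρ]
      set r : A → A → ℂ := fun b i => ∑ e, star (x (b, e)) * φ i e with hr
      have key : ∀ b, ‖∑ a ∈ J, star (X b a) * (α a * r b a)‖^2
          ≤ (J.card : ℝ) * ∑ i ∈ J, ‖α i‖^2 * ‖X b i‖^2 * ‖r b i‖^2 := by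
        intro b
        refine le_trans (stmt8_cs_lemma J _) ?_
        refine mul_le_mul_of_nonneg_left (le_of_eq ?_) (Nat.cast_nonneg _)
        refine Finset.sum_congr rfl fun i _ => ?_
        rw [norm_mul, norm_mul, norm_star, mul_pow, mul_pow]
        ring
      have hrw : ((J.card : ℝ) • (∑ b, ∑ i ∈ J,
              (((‖α i‖ ^ 2 : ℝ) : ℂ) * ((‖X b i‖ ^ 2 : ℝ) : ℂ)) * (r b i * star (r b i))) : ℂ)
            - ∑ b, (∑ a ∈ J, star (X b a) * (α a * r b a)) *
                star (∑ a ∈ J, star (X b a) * (α a * r b a))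
          = ((∑ b, ((J.card : ℝ) * ∑ i ∈ J, ‖α i‖^2 * ‖X b i‖^2 * ‖r b i‖^2
              - ‖∑ a ∈ J, star (X b a) * (α a * r b a)‖^2) : ℝ) : ℂ) := by
        rw [Complex.real_smul]
        simp only [stmt8_mul_star_self_eq]
        push_cast
        simp only [Finset.mul_sum, Finset.sum_sub_distrib, mul_assoc]
      rw [hrw, Complex.zero_le_real]
      refine Finset.sum_nonneg fun b _ => ?_
      have := key b
      linarith
  -- the base point: σE : partial trace of σρ
  set σE : Matrix E E ℂ :=
    Matrix.of (fun e e' : E => ∑ i ∈ J, ((‖α i‖^2 : ℝ) : ℂ) * (φ i e * star (φ i e')))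
    with hσEdef
  have hσEH : σE.IsHermitian := by
    rw [Matrix.IsHermitian]
    ext e e'
    rw [Matrix.conjTranspose_apply]
    simp only [hσEdef, Matrix.of_apply, star_sum]
    refine Finset.sum_congr rfl fun i _ => ?_
    simp only [star_mul', star_star, Complex.star_def, Complex.conj_ofReal, Complex.conj_conj]
    ring
  have hσEpsd : σE.PosSemidef := by
    refine Matrix.posSemidef_iff_dotProduct_mulVec.mpr ⟨hσEH, fun x => ?_⟩
    rw [stmt8_quad_expand]
    simp only [hσEdef, Matrix.of_apply]
    rw [stmt8_quad_sum_rank1 J (fun i => ((‖α i‖^2 : ℝ) : ℂ)) φ x]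
    refine Finset.sum_nonneg fun i _ => ?_
    rw [stmt8_mul_star_self_eq, ← Complex.ofReal_mul, Complex.zero_le_real]
    positivity
  have hσEtr : σE.trace = 1 := by
    simp only [Matrix.trace, Matrix.diag, hσEdef, Matrix.of_apply]
    rw [Finset.sum_comm]
    calc ∑ i ∈ J, ∑ e, ((‖α i‖^2 : ℝ) : ℂ) * (φ i e * star (φ i e))
        = ∑ i ∈ J, ((‖α i‖^2 : ℝ) : ℂ) * (∑ e, φ i e * star (φ i e)) := by
          simp only [← Finset.mul_sum]
      _ = ∑ i ∈ J, ((‖α i‖^2 : ℝ) : ℂ) := by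
          refine Finset.sum_congr rfl fun i hi => by rw [hφC i hi, mul_one]
      _ = 1 := by rw [← Complex.ofReal_sum, hα]; norm_num
  have hbase : (((1 : Matrix A A ℂ) ⊗ₖ σE) - σρ).PosSemidef := by
    rw [Matrix.posSemidef_iff_dotProduct_mulVec]
    constructor
    · rw [Matrix.IsHermitian, conjTranspose_sub, hρH.eq]
      congr 1
      ext ⟨b, e⟩ ⟨b', e'⟩
      rw [conjTranspose_apply, kroneckerMap_apply, kroneckerMap_apply, star_mul']
      have h2 := congrFun (congrFun hσEH.eq e) e'
      rw [conjTranspose_apply] at h2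
      rw [h2]
      congr 1
      by_cases h : b = b'
      · simp [Matrix.one_apply, h]
      · simp [Matrix.one_apply, h, Ne.symm h]
    · intro x
      rw [stmt8_quad_block (((1 : Matrix A A ℂ) ⊗ₖ σE) - σρ)
        (fun b e e' => ∑ i ∈ J, ((‖α i‖^2 * (1 - ‖X b i‖^2) : ℝ) : ℂ) * (φ i e * star (φ i e')))
        ?hM x]
      case hM =>
        intro b e b' e'
        rw [Matrix.sub_apply, Matrix.kroneckerMap_apply, Matrix.one_apply, hσρ]
        simp only [hσEdef, Matrix.of_apply]
        by_cases h : b = b'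
        · simp only [h, if_pos rfl, if_true, eq_self_iff_true, one_mul]
          rw [← Finset.sum_sub_distrib]
          refine Finset.sum_congr rfl fun i _ => ?_
          push_cast
          ring
        · simp [h]
      refine Finset.sum_nonneg fun b _ => ?_
      rw [stmt8_quad_sum_rank1 J (fun i => ((‖α i‖^2 * (1 - ‖X b i‖^2) : ℝ) : ℂ)) φ
        (fun e => x (b, e))]
      refine Finset.sum_nonneg fun i _ => ?_
      rw [stmt8_mul_star_self_eq, ← Complex.ofReal_mul, Complex.zero_le_real]
      have h1 := hXle1 b i
      have h2 : (0:ℝ) ≤ ‖α i‖^2 := sq_nonneg _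
      have h3 : (0:ℝ) ≤ ‖∑ e, star (x (b, e)) * φ i e‖^2 := sq_nonneg _
      have h4 : (0:ℝ) ≤ 1 - ‖X b i‖^2 := by linarith
      positivity
  -- boundedness of the ψ-set
  have hbdd : BddAbove {l : ℝ | ∃ σ : Matrix E E ℂ, σ.PosSemidef ∧ σ.trace = 1 ∧
      (((2 : ℝ) ^ (-l)) • ((1 : Matrix A A ℂ) ⊗ₖ σ) - σψ).PosSemidef} := by
    refine ⟨Real.logb 2 (Fintype.card A), ?_⟩
    rintro l ⟨σ, hσP, hσtr, hT⟩
    have htr : (0:ℂ) ≤ ∑ p : A × E, (((2 : ℝ) ^ (-l)) • ((1 : Matrix A A ℂ) ⊗ₖ σ) - σψ) p p :=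
      Finset.sum_nonneg fun p _ => stmt8_psd_diag _ hT p
    have h1 : ∑ p : A × E, (((1 : Matrix A A ℂ) ⊗ₖ σ)) p p = (Fintype.card A : ℂ) := by
      rw [Fintype.sum_prod_type]
      have hb : ∀ b : A, ∑ e, ((1 : Matrix A A ℂ) ⊗ₖ σ) (b, e) (b, e) = (1:ℂ) := by
        intro b
        have he : ∀ e, ((1 : Matrix A A ℂ) ⊗ₖ σ) (b, e) (b, e) = σ e e := by
          intro e
          rw [Matrix.kroneckerMap_apply, Matrix.one_apply, if_pos rfl, one_mul]
        rw [Finset.sum_congr rfl fun e _ => he e]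
        exact hσtr
      rw [Finset.sum_congr rfl fun b _ => hb b]
      simp
    have hsum : ∑ p : A × E, (((2 : ℝ) ^ (-l)) • ((1 : Matrix A A ℂ) ⊗ₖ σ) - σψ) p p
        = (((2 : ℝ) ^ (-l) * Fintype.card A : ℝ) : ℂ) - 1 := by
      simp only [Matrix.sub_apply, Matrix.smul_apply, Finset.sum_sub_distrib, htrψ]
      rw [← Finset.smul_sum, h1]
      push_cast
      rw [Complex.real_smul]
    rw [hsum] at htr
    have hre : (1:ℝ) ≤ (2 : ℝ) ^ (-l) * Fintype.card A := by
      have := (Complex.le_def.mp htr).1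
      simp at this
      linarith
    have hcpos : (0:ℝ) < Fintype.card A := by exact_mod_cast Fintype.card_pos
    have h2 : (1:ℝ) / Fintype.card A ≤ (2 : ℝ) ^ (-l) := (div_le_iff₀ hcpos).mpr hre
    have h3 : Real.logb 2 ((1:ℝ) / Fintype.card A) ≤ Real.logb 2 ((2:ℝ) ^ (-l)) :=
      (Real.logb_le_logb (by norm_num) (by positivity) (by positivity)).mpr h2
    rw [Real.logb_rpow (by norm_num) (by norm_num), one_div, Real.logb_inv] at h3
    linarith
  -- membership transfer
  have hmap : ∀ l ∈ {l : ℝ | ∃ σ : Matrix E E ℂ, σ.PosSemidef ∧ σ.trace = 1 ∧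
      (((2 : ℝ) ^ (-l)) • ((1 : Matrix A A ℂ) ⊗ₖ σ) - σρ).PosSemidef},
      (l - Real.logb 2 (J.card:ℝ)) ∈ {l : ℝ | ∃ σ : Matrix E E ℂ, σ.PosSemidef ∧ σ.trace = 1 ∧
      (((2 : ℝ) ^ (-l)) • ((1 : Matrix A A ℂ) ⊗ₖ σ) - σψ).PosSemidef} := by
    rintro l ⟨σ, hσP, hσtr, hT⟩
    refine ⟨σ, hσP, hσtr, ?_⟩
    have hpow : (2:ℝ) ^ (-(l - Real.logb 2 (J.card:ℝ)))
        = (J.card:ℝ) * (2:ℝ)^(-l) := by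
      rw [show -(l - Real.logb 2 (J.card:ℝ)) = Real.logb 2 (J.card:ℝ) + (-l) by ring,
        Real.rpow_add (by norm_num), h2c]
    have heq : ((2:ℝ)^(-(l - Real.logb 2 (J.card:ℝ)))) • ((1:Matrix A A ℂ) ⊗ₖ σ) - σψ
        = (J.card : ℝ) • (((2:ℝ)^(-l)) • ((1:Matrix A A ℂ) ⊗ₖ σ) - σρ)
          + (((J.card:ℝ)) • σρ - σψ) := by
      rw [hpow, smul_sub, smul_smul]
      abel
    rw [heq]
    exact stmt8_psd_combo _ _ _ (by positivity) hT hDpsd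
  -- the base point is in the ρ-set
  have hmem0 : (0:ℝ) ∈ {l : ℝ | ∃ σ : Matrix E E ℂ, σ.PosSemidef ∧ σ.trace = 1 ∧
      (((2 : ℝ) ^ (-l)) • ((1 : Matrix A A ℂ) ⊗ₖ σ) - σρ).PosSemidef} := by
    refine ⟨σE, hσEpsd, hσEtr, ?_⟩
    rw [neg_zero, Real.rpow_zero, one_smul]
    exact hbase
  -- conclude
  unfold condMinEntropy
  rw [ge_iff_le, sub_le_iff_le_add]
  refine csSup_le ⟨0, hmem0⟩ fun l hl => ?_
  have h := le_csSup hbdd (hmap l hl)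
  linarith
end
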